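/- arXiv:1706.09784 — 2 statements merged into one kernel-verified Lean document; each statement's English description precedes it below -/
import Mathlib

section
/- Let (h₁,h₂) : D² → C² be holomorphic with h(0)=0, Dh(0) = -I₂, and Re(h_j(z)/z_j) ≤ 0 whenever max(|z₁|,|z₂|) = |z_j| > 0. Write h₁(z) = -z₁ + Σ_{|α|≥2} c_α z^α. Then for every n ≥ 1, |c_{(1,n)}| ≤ 2. -/
open Complex

def polydisc2 : Set (ℂ × ℂ) := {z | ‖z.1‖ < 1 ∧ ‖z.2‖ < 1}

/-- The class `M(D²)` of infinitesimal generators on the unit polydisc in `ℂ²`. -/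
def memM2 (h : ℂ × ℂ → ℂ × ℂ) : Prop :=
  DifferentiableOn ℂ h polydisc2 ∧ h 0 = 0 ∧
    fderiv ℂ h 0 = -ContinuousLinearMap.id ℂ (ℂ × ℂ) ∧
    (∀ z ∈ polydisc2, z.1 ≠ 0 → ‖z.2‖ ≤ ‖z.1‖ → ((h z).1 / z.1).re ≤ 0) ∧
    (∀ z ∈ polydisc2, z.2 ≠ 0 → ‖z.1‖ ≤ ‖z.2‖ → ((h z).2 / z.2).re ≤ 0)

/-!
On the torus `|z₁| = |z₂| = r` the function `g = h₁ / z₁` satisfies `Re g ≤ 0`, and its double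
Fourier series is `Σ c_α r^(|α|-1) e^{i((α₁-1)θ + α₂φ)}`. The frequency `(0, -n)` does not occur,
so the `(0, n)`-th Fourier coefficient of `g` is also that of `g + conj g = 2 Re g`. As in
Carathéodory's lemma, it is bounded by the mean of `|2 Re g| = -2 Re g`, which is
`-2 Re c_{(1,0)} = 2`. Hence `|c_{(1,n)}| r^n ≤ 2`, and `r → 1` gives the claim.
-/

open MeasureTheory Set Filter Topology
open scoped Real ComplexConjugate

noncomputable def torusChar (k : ℤ × ℤ) (x : ℝ × ℝ) : ℂ :=
  exp (k.1 * x.1 * I) * exp (k.2 * x.2 * I)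

def torusBox : Set (ℝ × ℝ) := Ioc 0 (2 * π) ×ˢ Ioc 0 (2 * π)

theorem measurableSet_torusBox : MeasurableSet torusBox :=
  measurableSet_Ioc.prod measurableSet_Ioc

theorem norm_torusChar (k : ℤ × ℤ) (x : ℝ × ℝ) : ‖torusChar k x‖ = 1 := by
  simp [torusChar, norm_exp]

theorem continuous_torusChar (k : ℤ × ℤ) : Continuous (torusChar k) := by
  unfold torusChar; fun_prop

theorem torusChar_add (k l : ℤ × ℤ) (x : ℝ × ℝ) :
    torusChar (k + l) x = torusChar k x * torusChar l x := by
  simp only [torusChar, Prod.fst_add, Prod.snd_add, Int.cast_add, add_mul, exp_add]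
  ring

theorem conj_torusChar (k : ℤ × ℤ) (x : ℝ × ℝ) : conj (torusChar k x) = torusChar (-k) x := by
  simp only [torusChar, map_mul, ← exp_conj, conj_ofReal, conj_I, map_intCast, Prod.fst_neg,
    Prod.snd_neg, Int.cast_neg]
  ring_nf

theorem torusChar_zero (x : ℝ × ℝ) : torusChar 0 x = 1 := by
  simp [torusChar]

theorem setIntegral_exp_int_mul_I (j : ℤ) :
    ∫ θ in Ioc 0 (2 * π), exp (j * θ * I) = if j = 0 then ((2 * π : ℝ) : ℂ) else 0 := by
  rw [← intervalIntegral.integral_of_le Real.two_pi_pos.le]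
  split_ifs with hj
  · simp [hj]
  · have hjI : (j : ℂ) * I ≠ 0 := by simp [hj]
    simp_rw [mul_right_comm _ _ I]
    rw [integral_exp_mul_complex hjI,
      show (j : ℂ) * I * ((2 * π : ℝ) : ℂ) = j * (2 * π * I) by push_cast; ring,
      exp_int_mul_two_pi_mul_I]
    simp

theorem setIntegral_torusChar (k : ℤ × ℤ) :
    ∫ x in torusBox, torusChar k x = if k = 0 then ((2 * π : ℝ) : ℂ) ^ 2 else 0 := by
  rw [torusBox, Measure.volume_eq_prod]
  unfold torusChar
  rw [setIntegral_prod_mul (fun θ : ℝ => exp (k.1 * θ * I))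
    (fun φ : ℝ => exp (k.2 * φ * I)), setIntegral_exp_int_mul_I, setIntegral_exp_int_mul_I]
  rcases k with ⟨k₁, k₂⟩
  by_cases h₁ : k₁ = 0 <;> by_cases h₂ : k₂ = 0 <;> simp [h₁, h₂, sq]

theorem Continuous.integrableOn_torusBox {f : ℝ × ℝ → ℂ} (hf : Continuous f) :
    IntegrableOn f torusBox :=
  (hf.continuousOn.integrableOn_compact (isCompact_Icc.prod isCompact_Icc)).mono_set
    (prod_mono Ioc_subset_Icc_self Ioc_subset_Icc_self)

theorem norm_setIntegral_mul_torusChar_le {g : ℝ × ℝ → ℂ} (hg : IntegrableOn g torusBox)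
    (hre : ∀ x ∈ torusBox, (g x).re ≤ 0) {k : ℤ × ℤ}
    (hk : ∫ x in torusBox, g x * torusChar k x = 0) :
    ‖∫ x in torusBox, g x * torusChar (-k) x‖ ≤ -2 * (∫ x in torusBox, g x).re := by
  have hχ : ∀ l, Integrable (fun x => g x * torusChar l x) (volume.restrict torusBox) :=
    fun l => hg.mul_bdd (continuous_torusChar l).aestronglyMeasurable
      (Eventually.of_forall fun x => (norm_torusChar l x).le)
  -- `hk` says that the `(-k)`-th Fourier coefficient of `conj g` vanishes
  have hsym : ∫ x in torusBox, g x * torusChar (-k) x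
      = ∫ x in torusBox, ((2 * (g x).re : ℝ) : ℂ) * torusChar (-k) x := by
    calc ∫ x in torusBox, g x * torusChar (-k) x
        = (∫ x in torusBox, g x * torusChar (-k) x) + conj (∫ x in torusBox, g x * torusChar k x) :=
          by rw [hk, map_zero, add_zero]
      _ = ∫ x in torusBox, (g x * torusChar (-k) x + conj (g x) * torusChar (-k) x) := by
          have hconj := (conjCLE.toContinuousLinearMap).integrable_comp (hχ k)
          simp only [ContinuousLinearEquiv.coe_coe, conjCLE_apply, map_mul,
            conj_torusChar] at hconj
          rw [← integral_conj, integral_add (hχ _) hconj]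
          simp only [map_mul, conj_torusChar]
      _ = _ := by
          congr 1 with x
          rw [← add_mul, add_conj]
  calc ‖∫ x in torusBox, g x * torusChar (-k) x‖
      ≤ ∫ x in torusBox, ‖((2 * (g x).re : ℝ) : ℂ) * torusChar (-k) x‖ :=
        hsym ▸ norm_integral_le_integral_norm _
    _ = ∫ x in torusBox, -2 * (g x).re := by
        refine setIntegral_congr_fun measurableSet_torusBox fun x hx => ?_
        simp only [norm_mul, norm_torusChar, mul_one, norm_real, Real.norm_eq_abs,
          abs_of_nonpos (hre x hx)]
        ring
    _ = -2 * (∫ x in torusBox, g x).re := by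
        rw [integral_const_mul, ← RCLike.re_to_complex, ← integral_re hg]
        rfl

section Coefficients

variable {ι : Type*} [Countable ι] {a : ι → ℂ} {κ : ι → ℤ × ℤ} {g : ℝ × ℝ → ℂ}

theorem hasSum_setIntegral_mul_torusChar (ha : Summable fun i => ‖a i‖)
    (hg : ∀ x, HasSum (fun i => a i * torusChar (κ i) x) (g x)) (k : ℤ × ℤ) :
    HasSum (fun i => if κ i = k then ((2 * π : ℝ) : ℂ) ^ 2 * a i else 0)
      (∫ x in torusBox, g x * torusChar (-k) x) := by
  have hterm : ∀ i x, a i * torusChar (κ i) x * torusChar (-k) x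
      = a i * torusChar (κ i - k) x := fun i x => by
    rw [mul_assoc, ← torusChar_add, sub_eq_add_neg]
  have hintegrable :
      ∀ i, Integrable (fun x => a i * torusChar (κ i - k) x) (volume.restrict torusBox) :=
    fun i => (continuous_const.mul (continuous_torusChar _)).integrableOn_torusBox
  have hnorm : Summable fun i => ∫ x in torusBox, ‖a i * torusChar (κ i - k) x‖ := by
    simp only [norm_mul, norm_torusChar, mul_one, setIntegral_const, smul_eq_mul]
    exact ha.mul_left _
  have hcoeff : (fun i => ∫ x in torusBox, a i * torusChar (κ i - k) x)
      = fun i => if κ i = k then ((2 * π : ℝ) : ℂ) ^ 2 * a i else 0 := by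
    ext i
    simp only [integral_const_mul, setIntegral_torusChar, sub_eq_zero]
    split_ifs <;> ring
  have hsum :
      (fun x => ∑' i, a i * torusChar (κ i - k) x) = fun x => g x * torusChar (-k) x := by
    ext x
    rw [← ((hg x).mul_right _).tsum_eq]
    simp only [hterm]
  simpa only [hcoeff, hsum] using hasSum_integral_of_summable_integral_norm hintegrable hnorm

theorem setIntegral_mul_torusChar_eq (ha : Summable fun i => ‖a i‖)
    (hg : ∀ x, HasSum (fun i => a i * torusChar (κ i) x) (g x))
    (hκ : Function.Injective κ) (i : ι) :
    ∫ x in torusBox, g x * torusChar (-κ i) x = ((2 * π : ℝ) : ℂ) ^ 2 * a i := by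
  classical
  refine (hasSum_setIntegral_mul_torusChar ha hg (κ i)).unique ?_
  convert hasSum_ite_eq i (((2 * π : ℝ) : ℂ) ^ 2 * a i) using 2 with j
  rcases eq_or_ne j i with rfl | hj
  · simp
  · simp [hj, hκ.ne hj]

theorem setIntegral_mul_torusChar_eq_zero (ha : Summable fun i => ‖a i‖)
    (hg : ∀ x, HasSum (fun i => a i * torusChar (κ i) x) (g x))
    {k : ℤ × ℤ} (hk : k ∉ range κ) : ∫ x in torusBox, g x * torusChar (-k) x = 0 := by
  refine (hasSum_setIntegral_mul_torusChar ha hg k).unique ?_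
  convert hasSum_zero with i
  exact if_neg fun h => hk ⟨i, h⟩

end Coefficients

theorem monomial_div_circleMap (c : ℂ) (r : ℝ) (m n : ℕ) (x : ℝ × ℝ) :
    c * circleMap 0 r x.1 ^ m * circleMap 0 r x.2 ^ n / circleMap 0 r x.1
      = c * ((r ^ (m + n) / r : ℝ) : ℂ) * torusChar ((m : ℤ) - 1, n) x := by
  simp only [circleMap_zero, torusChar, mul_pow, ← exp_nat_mul, Int.cast_sub, Int.cast_natCast,
    Int.cast_one, sub_mul, exp_sub, one_mul]
  push_cast
  ring_nf

theorem summable_norm_mul_pow_add {f : ℂ × ℂ → ℂ} {c : ℕ × ℕ → ℂ}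
    (hc : ∀ z ∈ polydisc2, HasSum (fun α : ℕ × ℕ => c α * z.1 ^ α.1 * z.2 ^ α.2) (f z))
    {r : ℝ} (hr₀ : 0 ≤ r) (hr₁ : r < 1) : Summable fun α : ℕ × ℕ => ‖c α‖ * r ^ (α.1 + α.2) := by
  have hr : ((r : ℂ), (r : ℂ)) ∈ polydisc2 := by simpa [polydisc2, abs_of_nonneg hr₀] using hr₁
  refine (summable_norm_iff.mpr (hc _ hr).summable).congr fun α => ?_
  simp [abs_of_nonneg hr₀, pow_add, mul_assoc]

theorem norm_coeff_one_mul_pow_le {f : ℂ × ℂ → ℂ} (hf : ContinuousOn f polydisc2)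
    (hre : ∀ z ∈ polydisc2, z.1 ≠ 0 → ‖z.2‖ ≤ ‖z.1‖ → (f z / z.1).re ≤ 0) {c : ℕ × ℕ → ℂ}
    (hc : ∀ z ∈ polydisc2, HasSum (fun α : ℕ × ℕ => c α * z.1 ^ α.1 * z.2 ^ α.2) (f z))
    {r : ℝ} (hr₀ : 0 < r) (hr₁ : r < 1) {n : ℕ} (hn : 1 ≤ n) :
    ‖c (1, n)‖ * r ^ n ≤ -2 * (c (1, 0)).re := by
  set z : ℝ × ℝ → ℂ × ℂ := fun x => (circleMap 0 r x.1, circleMap 0 r x.2)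
  have hz : ∀ x, z x ∈ polydisc2 := fun x => by
    simp [z, polydisc2, norm_circleMap_zero, abs_of_pos hr₀, hr₁]
  have hz₁ : ∀ x, (z x).1 ≠ 0 := fun x => circleMap_ne_center hr₀.ne'
  set g : ℝ × ℝ → ℂ := fun x => f (z x) / (z x).1
  set a : ℕ × ℕ → ℂ := fun α => c α * ((r ^ (α.1 + α.2) / r : ℝ) : ℂ)
  set κ : ℕ × ℕ → ℤ × ℤ := fun α => ((α.1 : ℤ) - 1, α.2)
  have hκ : Function.Injective κ := fun α β h => by
    simp only [κ, Prod.mk.injEq] at h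
    ext <;> omega
  have ha : Summable fun α => ‖a α‖ := by
    refine ((summable_norm_mul_pow_add hc hr₀.le hr₁).div_const r).congr fun α => ?_
    simp only [a, norm_mul, norm_real, Real.norm_eq_abs, abs_div, abs_pow, abs_of_pos hr₀,
      mul_div_assoc]
  have hg : ∀ x, HasSum (fun α => a α * torusChar (κ α) x) (g x) := fun x => by
    simpa only [z, g, a, κ, monomial_div_circleMap] using (hc _ (hz x)).div_const (z x).1
  have hgc : Continuous g :=
    (hf.comp_continuous (by fun_prop) hz).div (by fun_prop) hz₁
  have hgre : ∀ x ∈ torusBox, (g x).re ≤ 0 := fun x _ =>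
    hre _ (hz x) (hz₁ x) (by simp [z, norm_circleMap_zero])
  have hvanish : ∫ x in torusBox, g x * torusChar (0, n) x = 0 := by
    simpa using setIntegral_mul_torusChar_eq_zero (k := (0, -n)) ha hg (by
      rintro ⟨α, hα⟩
      simp only [κ, Prod.mk.injEq] at hα
      omega)
  have hcoeff := setIntegral_mul_torusChar_eq ha hg hκ (1, n)
  have hconst := setIntegral_mul_torusChar_eq ha hg hκ (1, 0)
  have hbound := norm_setIntegral_mul_torusChar_le hgc.integrableOn_torusBox hgre hvanish
  have hpow : ∀ m : ℕ, r ^ (1 + m) / r = r ^ m := fun m => by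
    rw [pow_add, pow_one, mul_div_cancel_left₀ _ hr₀.ne']
  have hπ : (0 : ℝ) < (2 * π) ^ 2 := by positivity
  simp only [κ, Nat.cast_one, sub_self, Nat.cast_zero, Prod.neg_mk, neg_zero, Prod.mk_zero_zero,
    torusChar_zero, mul_one] at hcoeff hconst
  rw [Prod.neg_mk, neg_zero, hcoeff, hconst] at hbound
  simp only [a, hpow, pow_zero, ofReal_one, mul_one, ← ofReal_pow, norm_mul, norm_real,
    Real.norm_eq_abs, abs_of_pos hπ, abs_of_pos (pow_pos hr₀ n), re_ofReal_mul] at hbound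
  rw [mul_left_comm (-2 : ℝ)] at hbound
  exact le_of_mul_le_mul_left hbound hπ

theorem le_of_forall_mul_pow_le {x y : ℝ} (n : ℕ) (h : ∀ r ∈ Ioo (0 : ℝ) 1, x * r ^ n ≤ y) :
    x ≤ y := by
  have hlim : Tendsto (fun r : ℝ => x * r ^ n) (𝓝[<] 1) (𝓝 x) := by
    have hcont : Continuous fun r : ℝ => x * r ^ n := continuous_const.mul (continuous_pow n)
    simpa using (hcont.tendsto 1).mono_left nhdsWithin_le_nhds
  exact le_of_tendsto hlim (mem_of_superset (Ioo_mem_nhdsLT zero_lt_one) h)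

theorem coeff_one_n_le_two_general (h : ℂ × ℂ → ℂ × ℂ) (hM : memM2 h) (c : ℕ × ℕ → ℂ)
    (hc : ∀ z ∈ polydisc2, HasSum (fun α : ℕ × ℕ => c α * z.1 ^ α.1 * z.2 ^ α.2) ((h z).1))
    (h10 : c (1, 0) = -1) :
    ∀ n : ℕ, 1 ≤ n → ‖c (1, n)‖ ≤ 2 := by
  obtain ⟨hdiff, -, -, hre, -⟩ := hM
  intro n hn
  refine le_of_forall_mul_pow_le n fun r hr => ?_
  simpa [h10] using norm_coeff_one_mul_pow_le hdiff.continuousOn.fst hre hc hr.1 hr.2 hn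

/-- For `h = (h₁,h₂) ∈ M(D²)` with `h₁(z) = -z₁ + Σ_{|α|≥2} c_α z^α`, one has
`|c_{(1,n)}| ≤ 2` for all `n ≥ 1`. -/
theorem coeff_one_n_le_two (h : ℂ × ℂ → ℂ × ℂ) (hM : memM2 h) (c : ℕ × ℕ → ℂ)
    (hc : ∀ z ∈ polydisc2, HasSum (fun α : ℕ × ℕ => c α * z.1 ^ α.1 * z.2 ^ α.2) ((h z).1))
    (h00 : c (0, 0) = 0) (h10 : c (1, 0) = -1) (h01 : c (0, 1) = 0) :
    ∀ n : ℕ, 1 ≤ n → ‖c (1, n)‖ ≤ 2 :=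
  coeff_one_n_le_two_general h hM c hc h10
end

section
/- The map H₂ : D² → C² given by H₂(z₁,z₂) = (-z₁·(-1+z₂)/(-1-z₂), -z₂) belongs to M(D²), and the coefficient of z₁z₂ in its first component equals -2 in modulus equal to 2; in particular the bound |c_{(1,1)}| ≤ 2 for generators in M(D²) is attained. -/
/-!
The first component of `H₂` is `-z₁ (1 - z₂)/(1 + z₂)`, and the Cayley transform
`w ↦ (1 - w)/(1 + w)` maps the closed unit disc into the closed right half-plane, so
`Re (H₂(z)₁ / z₁) ≤ 0`; the second component is linear. The geometric
expansion of `1/(1 + z₂)` exhibits the coefficient `2` of `z₁z₂`, and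
any other double power series for the same function has the same coefficients, because a
double power series summing to `0` near the origin has vanishing rows by one-variable
uniqueness applied first in `z₁`, then in `z₂`.
-/

open Complex

open Filter Topology

section Uniqueness

variable {𝕜 E : Type*} [NontriviallyNormedField 𝕜] [NormedAddCommGroup E] [NormedSpace 𝕜 E]

theorem eq_zero_of_hasSum_pow_smul {a : ℕ → E}
    (h : ∀ᶠ z in 𝓝 (0 : 𝕜), HasSum (fun n => z ^ n • a n) 0) : a = 0 := by
  let p : FormalMultilinearSeries 𝕜 𝕜 E :=
    fun n => ContinuousMultilinearMap.mkPiRing 𝕜 (Fin n) (a n)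
  have hp : HasFPowerSeriesAt 0 p 0 :=
    hasFPowerSeriesAt_iff.2 (by simpa [p, FormalMultilinearSeries.coeff] using h)
  funext n
  simpa [p, FormalMultilinearSeries.coeff] using congrArg (·.coeff n) hp.eq_zero

variable [CompleteSpace E]

theorem eq_zero_of_hasSum_pow_smul_pow_smul {e : ℕ × ℕ → E}
    (h : ∀ᶠ z in 𝓝 (0 : 𝕜 × 𝕜), HasSum (fun α => z.1 ^ α.1 • z.2 ^ α.2 • e α) 0) :
    e = 0 := by
  obtain ⟨r, hr, hball⟩ := Metric.eventually_nhds_iff.1 h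
  have hsum (x y : 𝕜) (hx : ‖x‖ < r) (hy : ‖y‖ < r) :
      HasSum (fun α : ℕ × ℕ => x ^ α.1 • y ^ α.2 • e α) 0 :=
    hball (y := (x, y)) (by simpa [Prod.norm_def] using And.intro hx hy)
  obtain ⟨c, hc0, hcr⟩ := NormedField.exists_norm_lt 𝕜 hr
  -- summability of the rows is read off at a fixed `z₁ = c ≠ 0`
  have hrow (w : 𝕜) (hw : ‖w‖ < r) (n : ℕ) : Summable (fun m => w ^ m • e (n, m)) := by
    have := ((hsum c w hcr hw).summable.prod_factor n).const_smul (c ^ n)⁻¹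
    simpa [inv_smul_smul₀ (pow_ne_zero n (norm_pos_iff.1 hc0))] using this
  have hrow_zero (w : 𝕜) (hw : ‖w‖ < r) : (fun n => ∑' m, w ^ m • e (n, m)) = 0 := by
    refine eq_zero_of_hasSum_pow_smul (𝕜 := 𝕜) ?_
    filter_upwards [Metric.ball_mem_nhds (0 : 𝕜) hr] with z hz
    exact (hsum z w (by simpa using hz) hw).prod_fiberwise
      fun n => (hrow w hw n).hasSum.const_smul (z ^ n)
  ext ⟨n, m⟩
  refine congrFun (eq_zero_of_hasSum_pow_smul (𝕜 := 𝕜) (a := fun m => e (n, m)) ?_) m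
  filter_upwards [Metric.ball_mem_nhds (0 : 𝕜) hr] with w hw
  have hw : ‖w‖ < r := by simpa using hw
  simpa [congrFun (hrow_zero w hw) n] using (hrow w hw n).hasSum

theorem eq_of_hasSum_pow_smul_pow_smul {c d : ℕ × ℕ → E} {f : 𝕜 × 𝕜 → E}
    (hc : ∀ᶠ z in 𝓝 0, HasSum (fun α => z.1 ^ α.1 • z.2 ^ α.2 • c α) (f z))
    (hd : ∀ᶠ z in 𝓝 0, HasSum (fun α => z.1 ^ α.1 • z.2 ^ α.2 • d α) (f z)) : c = d :=
  sub_eq_zero.1 <| eq_zero_of_hasSum_pow_smul_pow_smul <| (hc.and hd).mono fun z h => by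
    simpa [smul_sub] using h.1.sub h.2

end Uniqueness

theorem polydisc2_eq_ball : polydisc2 = Metric.ball 0 1 := by
  ext z; simp [polydisc2, Prod.norm_def]

theorem one_add_ne_zero_of_norm_lt_one {w : ℂ} (hw : ‖w‖ < 1) : 1 + w ≠ 0 := fun h => by
  simp [eq_neg_of_add_eq_zero_right h] at hw

theorem neg_one_sub_ne_zero_of_norm_lt_one {w : ℂ} (hw : ‖w‖ < 1) : -1 - w ≠ 0 := by
  rw [← neg_add']
  exact neg_ne_zero.2 (one_add_ne_zero_of_norm_lt_one hw)

theorem re_one_sub_div_one_add_nonneg {w : ℂ} (hw : ‖w‖ ≤ 1) : 0 ≤ ((1 - w) / (1 + w)).re := by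
  have hw2 : w.re * w.re + w.im * w.im ≤ 1 := by
    rw [← normSq_apply, ← Complex.sq_norm]
    nlinarith [norm_nonneg w]
  rw [div_re, ← add_div]
  refine div_nonneg ?_ (normSq_nonneg _)
  simp only [sub_re, add_re, one_re, sub_im, add_im, one_im]
  nlinarith

noncomputable def H2 (z : ℂ × ℂ) : ℂ × ℂ := (-z.1 * (-1 + z.2) / (-1 - z.2), -z.2)

theorem differentiableOn_H2 : DifferentiableOn ℂ H2 polydisc2 := fun z hz => by
  have hz2 := neg_one_sub_ne_zero_of_norm_lt_one hz.2
  unfold H2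
  fun_prop (disch := exact hz2)

theorem hasFDerivAt_H2_zero : HasFDerivAt H2 (-ContinuousLinearMap.id ℂ (ℂ × ℂ)) 0 := by
  have hH2 : H2 = fun z => (-z.1 * ((-1 + z.2) / (-1 - z.2)), -z.2) := by
    funext z; simp only [H2, mul_div_assoc]
  have hd : DifferentiableAt ℂ (fun z : ℂ × ℂ => (-1 + z.2) / (-1 - z.2)) 0 := by
    fun_prop (disch := norm_num)
  rw [hH2]
  refine (((hasFDerivAt_fst (p := 0)).neg.mul hd.hasFDerivAt).prodMk
    (hasFDerivAt_snd (p := 0)).neg).congr_fderiv ?_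
  ext <;> simp

theorem re_H2_fst_div_nonpos {z : ℂ × ℂ} (hz : z ∈ polydisc2) (hz1 : z.1 ≠ 0) :
    ((H2 z).1 / z.1).re ≤ 0 := by
  have hratio : (H2 z).1 / z.1 = -((1 - z.2) / (1 + z.2)) := by
    have := one_add_ne_zero_of_norm_lt_one hz.2
    have := neg_one_sub_ne_zero_of_norm_lt_one hz.2
    simp only [H2]
    field_simp
    ring
  rw [hratio, neg_re, neg_nonpos]
  exact re_one_sub_div_one_add_nonneg hz.2.le

theorem memM2_H2 : memM2 H2 := by
  refine ⟨differentiableOn_H2, by simp [H2], hasFDerivAt_H2_zero.fderiv,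
    fun z hz hz1 _ => re_H2_fst_div_nonpos hz hz1, fun z _ hz2 _ => ?_⟩
  simp [H2, neg_div, div_self hz2]

-- `-z₁ (1 - z₂)/(1 + z₂) = z₁ - 2 z₁ ∑ (-z₂)^m`
noncomputable def H2coeff (α : ℕ × ℕ) : ℂ :=
  if α.1 = 1 then (if α.2 = 0 then 1 else 0) - 2 * (-1) ^ α.2 else 0

theorem hasSum_H2coeff {z : ℂ × ℂ} (hz : z ∈ polydisc2) :
    HasSum (fun α => z.1 ^ α.1 • z.2 ^ α.2 • H2coeff α) (H2 z).1 := by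
  have := one_add_ne_zero_of_norm_lt_one hz.2
  have := neg_one_sub_ne_zero_of_norm_lt_one hz.2
  have hgeom : HasSum (fun m => z.2 ^ m * (-1) ^ m) (1 + z.2)⁻¹ := by
    simpa [← mul_pow, mul_comm] using
      hasSum_geometric_of_norm_lt_one (ξ := -z.2) (by simpa using hz.2)
  have hrow : HasSum (fun m : ℕ => z.1 ^ 1 • z.2 ^ m • H2coeff (1, m)) (H2 z).1 := by
    have hval : (H2 z).1 = z.1 * (1 - 2 * (1 + z.2)⁻¹) := by
      simp only [H2]; field_simp; ring
    rw [hval]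
    refine (((hasSum_ite_eq 0 1).sub (hgeom.mul_left 2)).mul_left z.1).congr_fun fun m => ?_
    rcases eq_or_ne m 0 with rfl | hm
    · simp [H2coeff]
    · simp only [H2coeff, smul_eq_mul, ↓reduceIte, hm, pow_one]
      ring
  refine (Function.Injective.hasSum_iff (g := fun m => (1, m))
    (fun _ _ h => (Prod.mk.inj h).2) ?_).1 hrow
  rintro ⟨n, m⟩ hnm
  simp [H2coeff, show n ≠ 1 by rintro rfl; exact hnm ⟨m, rfl⟩]

/-- `H₂(z₁,z₂) = (-z₁(-1+z₂)/(-1-z₂), -z₂)` belongs to `M(D²)`, and the coefficient of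
`z₁z₂` in its first component has modulus `2`; the bound `|c_{(1,1)}| ≤ 2` is attained. -/
theorem H2_mem_and_sharp :
    memM2 (fun z : ℂ × ℂ => (-z.1 * (-1 + z.2) / (-1 - z.2), -z.2)) ∧
    ∀ c : ℕ × ℕ → ℂ,
      (∀ z ∈ polydisc2, HasSum (fun α : ℕ × ℕ => c α * z.1 ^ α.1 * z.2 ^ α.2)
        (-z.1 * (-1 + z.2) / (-1 - z.2))) →
      ‖c (1, 1)‖ = 2 := by
  refine ⟨memM2_H2, fun c hc => ?_⟩
  have hnhds : ∀ᶠ z in 𝓝 (0 : ℂ × ℂ), z ∈ polydisc2 :=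
    polydisc2_eq_ball ▸ Metric.ball_mem_nhds 0 one_pos
  have hc_eq : c = H2coeff := by
    refine eq_of_hasSum_pow_smul_pow_smul (hnhds.mono fun z hz => ?_)
      (hnhds.mono fun z hz => hasSum_H2coeff hz)
    refine (hc z hz).congr_fun fun α => ?_
    simp only [smul_eq_mul]; ring
  simp [hc_eq, H2coeff]
end
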